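/- arXiv:1210.3218 — 4 statements merged into one kernel-verified Lean document; each statement's English description precedes it below -/
import Mathlib

section
/- Let $\trianglelefteq$ be a partial order on a Coxeter group $W$ satisfying: (PO2) for all $w \in W$ and $s \in S$ with $w \triangleleft ws$ the interval $[w, ws]$ is $\{w, ws\}$; (PO3i) for $x,y \in W$ with $x \triangleleft xs$ and $y \trianglelefteq xs$, one has $ys \trianglelefteq xs$; (PO3ii) for $x,y$ with $xs \triangleleft x$ and $xs \trianglelefteq y$, one has $xs \trianglelefteq ys$; and (PO1) any $w$ and $ws$ are comparable. Then $(W, \trianglelefteq)$ is a directed poset: for any $u, v \in W$ there exists $z \in W$ with $u \trianglelefteq z$ and $v \trianglelefteq z$. -/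
/-!
If `u ⊴ z` and `vs ⊴ z`, replace `z` by the larger `y` of `z` and `zs` (PO1); then `ys ⊲ y`,
so (PO3i) applied at `x = ys` turns `vs ⊴ y` into `v ⊴ y`. Hence the set of `w` for which `u` and
`uw` have a common upper bound contains `1` and is closed under right multiplication by simple
reflections, so it is all of `W`.
-/

namespace CoxeterSystem

variable {B W : Type*} [Group W] {M : CoxeterMatrix B} (cs : CoxeterSystem M W)

theorem mul_simple_ne (w : W) (i : B) : w * cs.simple i ≠ w :=
  fun h ↦ cs.length_mul_simple_ne w i (congrArg cs.length h)

variable {cs} {le : W → W → Prop}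

theorem exists_le_mul_simple_lt (hrefl : ∀ w, le w w)
    (PO1 : ∀ (w : W) (i : B), le w (w * cs.simple i) ∨ le (w * cs.simple i) w)
    (z : W) (i : B) : ∃ y, le z y ∧ le (y * cs.simple i) y ∧ y * cs.simple i ≠ y := by
  rcases PO1 z i with hz | hz
  · refine ⟨z * cs.simple i, hz, ?_, ?_⟩
    · rwa [simple_mul_simple_cancel_right]
    · rw [simple_mul_simple_cancel_right]
      exact (cs.mul_simple_ne z i).symm
  · exact ⟨z, hrefl z, hz, cs.mul_simple_ne z i⟩

theorem mul_simple_le_of_le_of_mul_simple_lt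
    (PO3i : ∀ (x y : W) (i : B), (le x (x * cs.simple i) ∧ x ≠ x * cs.simple i) →
      le y (x * cs.simple i) → le (y * cs.simple i) (x * cs.simple i))
    {w y : W} {i : B} (hy : le (y * cs.simple i) y ∧ y * cs.simple i ≠ y) (hw : le w y) :
    le (w * cs.simple i) y := by
  have := PO3i (y * cs.simple i) w i
  simp only [simple_mul_simple_cancel_right] at this
  exact this hy hw

theorem exists_common_upper_bound_of_mul_simple (hrefl : ∀ w, le w w)
    (htrans : ∀ u v w, le u v → le v w → le u w)
    (PO1 : ∀ (w : W) (i : B), le w (w * cs.simple i) ∨ le (w * cs.simple i) w)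
    (PO3i : ∀ (x y : W) (i : B), (le x (x * cs.simple i) ∧ x ≠ x * cs.simple i) →
      le y (x * cs.simple i) → le (y * cs.simple i) (x * cs.simple i))
    {u v z : W} {i : B} (hu : le u z) (hv : le (v * cs.simple i) z) :
    ∃ y, le u y ∧ le v y := by
  obtain ⟨y, hzy, hy⟩ := exists_le_mul_simple_lt hrefl PO1 z i
  refine ⟨y, htrans _ _ _ hu hzy, ?_⟩
  simpa only [simple_mul_simple_cancel_right] using
    mul_simple_le_of_le_of_mul_simple_lt PO3i hy (htrans _ _ _ hv hzy)

end CoxeterSystem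

open CoxeterSystem in
theorem stmt3_general {B W : Type*} [Group W] {M : CoxeterMatrix B} (cs : CoxeterSystem M W)
    (le : W → W → Prop)
    (hrefl : ∀ w, le w w)
    (htrans : ∀ u v w, le u v → le v w → le u w)
    -- (PO1): `w` and `ws` are comparable for every simple reflection `s`
    (PO1 : ∀ (w : W) (i : B), le w (w * cs.simple i) ∨ le (w * cs.simple i) w)
    -- (PO3i): if `x ⊲ xs` and `y ⊴ xs` then `ys ⊴ xs`
    (PO3i : ∀ (x y : W) (i : B), (le x (x * cs.simple i) ∧ x ≠ x * cs.simple i) →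
      le y (x * cs.simple i) → le (y * cs.simple i) (x * cs.simple i)) :
    ∀ u v : W, ∃ z : W, le u z ∧ le v z := by
  intro u v
  have key : ∀ w, ∃ z, le u z ∧ le (u * w) z := fun w ↦ by
    induction w using cs.simple_induction_right with
    | one => exact ⟨u, hrefl u, by rw [mul_one]; exact hrefl u⟩
    | mul_simple_right w i ih =>
      obtain ⟨z, hu, huw⟩ := ih
      refine exists_common_upper_bound_of_mul_simple hrefl htrans PO1 PO3i (i := i) hu ?_
      rwa [← mul_assoc, simple_mul_simple_cancel_right]
  simpa only [mul_inv_cancel_left] using key (u⁻¹ * v)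

/-- **Directedness** (Lemma 7.9 of the paper). Let `⊴` (here `le`) be a partial order on a
Coxeter group `W` satisfying (PO1), (PO2), (PO3i), (PO3ii). Then any two elements of `W`
have a common upper bound. -/
theorem stmt3 {B W : Type*} [Group W] {M : CoxeterMatrix B} (cs : CoxeterSystem M W)
    (le : W → W → Prop)
    (hrefl : ∀ w, le w w)
    (htrans : ∀ u v w, le u v → le v w → le u w)
    (hantisymm : ∀ u v, le u v → le v u → u = v)
    -- (PO1): `w` and `ws` are comparable for every simple reflection `s`
    (PO1 : ∀ (w : W) (i : B), le w (w * cs.simple i) ∨ le (w * cs.simple i) w)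
    -- (PO2): if `w ⊲ ws` then the interval `[w, ws]` is `{w, ws}`
    (PO2 : ∀ (w : W) (i : B), (le w (w * cs.simple i) ∧ w ≠ w * cs.simple i) →
      ∀ z, le w z → le z (w * cs.simple i) → z = w ∨ z = w * cs.simple i)
    -- (PO3i): if `x ⊲ xs` and `y ⊴ xs` then `ys ⊴ xs`
    (PO3i : ∀ (x y : W) (i : B), (le x (x * cs.simple i) ∧ x ≠ x * cs.simple i) →
      le y (x * cs.simple i) → le (y * cs.simple i) (x * cs.simple i))
    -- (PO3ii): if `xs ⊲ x` and `xs ⊴ y` then `xs ⊴ ys`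
    (PO3ii : ∀ (x y : W) (i : B), (le (x * cs.simple i) x ∧ x * cs.simple i ≠ x) →
      le (x * cs.simple i) y → le (x * cs.simple i) (y * cs.simple i)) :
    ∀ u v : W, ∃ z : W, le u z ∧ le v z :=
  stmt3_general cs le hrefl htrans PO1 PO3i
end

section
/- Let $\trianglelefteq$ be a partial order on a Coxeter group $W$ satisfying properties (PO1), (PO2), (PO3) as above. Let $s \in S$ be a simple reflection and $t$ a reflection with $s \ne t$, and suppose $w \in W$ satisfies $w \triangleleft\!\!\cdot\, ws$ and $w \triangleleft\!\!\cdot\, wt$ (covering relations). Then $ws \triangleleft\!\!\cdot\, wts$ and $wt \triangleleft\!\!\cdot\, wts$. -/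
/-!
Both lower relations `ws ⊴ wts` and `wt ⊴ wts` come from (PO1): the two elements differ by a
reflection, so they are comparable, and the wrong comparison would, after lifting through `s`
with (PO3), put `wt` into `[w, ws]` or `ws` into `[w, wt]`. The interval `[wt, wts]` is
handled by (PO2). For `z ∈ [ws, wts]`, lifting through `s` shows first that `zs ⊲ z`, and then
that `zs ∈ [w, wt] = {w, wt}`, so `z ∈ {ws, wts}`.
-/

variable {B W : Type*} [Group W] {M : CoxeterMatrix B}

def covBy (le : W → W → Prop) (u v : W) : Prop :=
  (le u v ∧ u ≠ v) ∧ ∀ z, le u z → le z v → z = u ∨ z = v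

lemma not_le_of_covBy {α : Type*} {le : α → α → Prop} {u v z : α} (h : covBy le u v)
    (huz : le u z) (hzu : z ≠ u) (hzv : z ≠ v) : ¬ le z v :=
  fun hle => (h.2 z huz hle).elim hzu hzv

lemma CoxeterSystem.mul_simple_ne_s4 (cs : CoxeterSystem M W) (w : W) (i : B) :
    w * cs.simple i ≠ w :=
  fun h => cs.length_mul_simple_ne w i (congrArg cs.length h)

section

variable {cs : CoxeterSystem M W} {le : W → W → Prop}

lemma le_mul_simple_or_mul_simple_le
    (PO1 : ∀ (w t : W), cs.IsReflection t → le w (t * w) ∨ le (t * w) w) (x : W) (i : B) :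
    le x (x * cs.simple i) ∨ le (x * cs.simple i) x := by
  have h := PO1 x (x * cs.simple i * x⁻¹) ((cs.isReflection_simple i).conj x)
  rwa [inv_mul_cancel_right] at h

lemma mul_simple_le_of_le
    (PO3i : ∀ (x y : W) (i : B), (le x (x * cs.simple i) ∧ x ≠ x * cs.simple i) →
      le y (x * cs.simple i) → le (y * cs.simple i) (x * cs.simple i))
    {u v y : W} {i : B} (huv : u * cs.simple i = v) (hle : le u v) (hy : le y v) :
    le (y * cs.simple i) v := by
  subst huv
  exact PO3i u y i ⟨hle, (cs.mul_simple_ne_s4 u i).symm⟩ hy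

lemma le_mul_simple_of_le
    (PO3ii : ∀ (x y : W) (i : B), (le (x * cs.simple i) x ∧ x * cs.simple i ≠ x) →
      le (x * cs.simple i) y → le (x * cs.simple i) (y * cs.simple i))
    {u v y : W} {i : B} (huv : u * cs.simple i = v) (hle : le u v) (hy : le u y) :
    le u (y * cs.simple i) := by
  subst huv
  have h := PO3ii (u * cs.simple i) y i
  rw [cs.simple_mul_simple_cancel_right] at h
  exact h ⟨hle, (cs.mul_simple_ne_s4 u i).symm⟩ hy

lemma mul_simple_le_mul_mul_simple
    (PO1 : ∀ (w t : W), cs.IsReflection t → le w (t * w) ∨ le (t * w) w)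
    (PO3i : ∀ (x y : W) (i : B), (le x (x * cs.simple i) ∧ x ≠ x * cs.simple i) →
      le y (x * cs.simple i) → le (y * cs.simple i) (x * cs.simple i))
    {i : B} {t : W} (ht : cs.IsReflection t) (hst : cs.simple i ≠ t) {w : W}
    (hws : covBy le w (w * cs.simple i)) (hwt : covBy le w (w * t)) :
    le (w * cs.simple i) (w * t * cs.simple i) := by
  have hcomp := PO1 (w * cs.simple i) (w * t * w⁻¹) (ht.conj w)
  rw [show w * t * w⁻¹ * (w * cs.simple i) = w * t * cs.simple i by group] at hcomp
  refine hcomp.resolve_right fun h => ?_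
  have hle := mul_simple_le_of_le PO3i rfl hws.1.1 h
  rw [cs.simple_mul_simple_cancel_right] at hle
  exact not_le_of_covBy hws hwt.1.1 hwt.1.2.symm
    (fun heq => hst (mul_left_cancel heq).symm) hle

lemma mul_le_mul_mul_simple
    (PO1 : ∀ (w t : W), cs.IsReflection t → le w (t * w) ∨ le (t * w) w)
    (PO3i : ∀ (x y : W) (i : B), (le x (x * cs.simple i) ∧ x ≠ x * cs.simple i) →
      le y (x * cs.simple i) → le (y * cs.simple i) (x * cs.simple i))
    {i : B} {t : W} (hst : cs.simple i ≠ t) {w : W}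
    (hws : covBy le w (w * cs.simple i)) (hwt : covBy le w (w * t)) :
    le (w * t) (w * t * cs.simple i) := by
  refine (le_mul_simple_or_mul_simple_le PO1 (w * t) i).resolve_right fun h => ?_
  have hle := mul_simple_le_of_le PO3i (cs.simple_mul_simple_cancel_right i) h hwt.1.1
  exact not_le_of_covBy hwt hws.1.1 hws.1.2.symm (fun heq => hst (mul_left_cancel heq)) hle

lemma mul_simple_le_of_mem_interval
    (hantisymm : ∀ u v, le u v → le v u → u = v)
    (htrans : ∀ u v w, le u v → le v w → le u w)
    (PO1 : ∀ (w t : W), cs.IsReflection t → le w (t * w) ∨ le (t * w) w)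
    (PO3ii : ∀ (x y : W) (i : B), (le (x * cs.simple i) x ∧ x * cs.simple i ≠ x) →
      le (x * cs.simple i) y → le (x * cs.simple i) (y * cs.simple i))
    {i : B} {t : W} (hst : cs.simple i ≠ t) {w : W}
    (hws : covBy le w (w * cs.simple i)) (hwt : covBy le w (w * t))
    {z : W} (hz₁ : le (w * cs.simple i) z) (hz₂ : le z (w * t * cs.simple i)) :
    le (z * cs.simple i) z := by
  refine (le_mul_simple_or_mul_simple_le PO1 z i).resolve_left fun h => ?_
  have hzwt := le_mul_simple_of_le PO3ii rfl h hz₂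
  rw [cs.simple_mul_simple_cancel_right] at hzwt
  rcases hwt.2 z (htrans _ _ _ hws.1.1 hz₁) hzwt with rfl | rfl
  · exact hws.1.2 (hantisymm _ _ hws.1.1 hz₁)
  · exact not_le_of_covBy hwt hws.1.1 hws.1.2.symm (fun heq => hst (mul_left_cancel heq)) hz₁

lemma eq_or_eq_of_mem_interval
    (hantisymm : ∀ u v, le u v → le v u → u = v)
    (htrans : ∀ u v w, le u v → le v w → le u w)
    (PO1 : ∀ (w t : W), cs.IsReflection t → le w (t * w) ∨ le (t * w) w)
    (PO3ii : ∀ (x y : W) (i : B), (le (x * cs.simple i) x ∧ x * cs.simple i ≠ x) →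
      le (x * cs.simple i) y → le (x * cs.simple i) (y * cs.simple i))
    {i : B} {t : W} (hst : cs.simple i ≠ t) {w : W}
    (hws : covBy le w (w * cs.simple i)) (hwt : covBy le w (w * t))
    {z : W} (hz₁ : le (w * cs.simple i) z) (hz₂ : le z (w * t * cs.simple i)) :
    z = w * cs.simple i ∨ z = w * t * cs.simple i := by
  have hzs := mul_simple_le_of_mem_interval hantisymm htrans PO1 PO3ii hst hws hwt hz₁ hz₂
  have hzs_wt := le_mul_simple_of_le PO3ii (cs.simple_mul_simple_cancel_right i) hzs
    (htrans _ _ _ hzs hz₂)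
  have hw_zs := le_mul_simple_of_le PO3ii rfl hws.1.1 (htrans _ _ _ hws.1.1 hz₁)
  rw [cs.simple_mul_simple_cancel_right] at hzs_wt
  rcases hwt.2 _ hw_zs hzs_wt with h | h <;> [left; right] <;>
    simpa only [cs.simple_mul_simple_cancel_right] using congrArg (· * cs.simple i) h

end

theorem stmt4_general (cs : CoxeterSystem M W)
    (le : W → W → Prop)
    (htrans : ∀ u v w, le u v → le v w → le u w)
    (hantisymm : ∀ u v, le u v → le v u → u = v)
    -- (PO1): `w` and `tw` are comparable for every reflection `t`
    (PO1 : ∀ (w t : W), cs.IsReflection t → le w (t * w) ∨ le (t * w) w)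
    -- (PO2): if `w ⊲ ws` then the interval `[w, ws]` is `{w, ws}`
    (PO2 : ∀ (w : W) (i : B), (le w (w * cs.simple i) ∧ w ≠ w * cs.simple i) →
      ∀ z, le w z → le z (w * cs.simple i) → z = w ∨ z = w * cs.simple i)
    -- (PO3i): if `x ⊲ xs` and `y ⊴ xs` then `ys ⊴ xs`
    (PO3i : ∀ (x y : W) (i : B), (le x (x * cs.simple i) ∧ x ≠ x * cs.simple i) →
      le y (x * cs.simple i) → le (y * cs.simple i) (x * cs.simple i))
    -- (PO3ii): if `xs ⊲ x` and `xs ⊴ y` then `xs ⊴ ys`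
    (PO3ii : ∀ (x y : W) (i : B), (le (x * cs.simple i) x ∧ x * cs.simple i ≠ x) →
      le (x * cs.simple i) y → le (x * cs.simple i) (y * cs.simple i))
    (i : B) (t : W) (ht : cs.IsReflection t) (hst : cs.simple i ≠ t)
    (w : W)
    (hws : covBy le w (w * cs.simple i))
    (hwt : covBy le w (w * t)) :
    covBy le (w * cs.simple i) (w * t * cs.simple i) ∧
      covBy le (w * t) (w * t * cs.simple i) := by
  have hne_s : w * cs.simple i ≠ w * t * cs.simple i :=
    fun h => hwt.1.2 (mul_right_cancel h)
  have hne_t : w * t ≠ w * t * cs.simple i := (cs.mul_simple_ne_s4 (w * t) i).symm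
  have hle_t := mul_le_mul_mul_simple PO1 PO3i hst hws hwt
  exact ⟨⟨⟨mul_simple_le_mul_mul_simple PO1 PO3i ht hst hws hwt, hne_s⟩,
      fun _ => eq_or_eq_of_mem_interval hantisymm htrans PO1 PO3ii hst hws hwt⟩,
    ⟨⟨hle_t, hne_t⟩, PO2 (w * t) i ⟨hle_t, hne_t⟩⟩⟩

/-- **Length-two intervals** (Lemma 7.10 of the paper). -/
theorem stmt4 (cs : CoxeterSystem M W)
    (le : W → W → Prop)
    (hrefl : ∀ w, le w w)
    (htrans : ∀ u v w, le u v → le v w → le u w)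
    (hantisymm : ∀ u v, le u v → le v u → u = v)
    -- (PO1): `w` and `tw` are comparable for every reflection `t`, and these
    -- relations generate the partial order
    (PO1 : ∀ (w t : W), cs.IsReflection t → le w (t * w) ∨ le (t * w) w)
    (PO1gen : ∀ a b, le a b →
      Relation.ReflTransGen (fun x y => le x y ∧ ∃ t, cs.IsReflection t ∧ y = t * x) a b)
    -- (PO2): if `w ⊲ ws` then the interval `[w, ws]` is `{w, ws}`
    (PO2 : ∀ (w : W) (i : B), (le w (w * cs.simple i) ∧ w ≠ w * cs.simple i) →
      ∀ z, le w z → le z (w * cs.simple i) → z = w ∨ z = w * cs.simple i)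
    -- (PO3i): if `x ⊲ xs` and `y ⊴ xs` then `ys ⊴ xs`
    (PO3i : ∀ (x y : W) (i : B), (le x (x * cs.simple i) ∧ x ≠ x * cs.simple i) →
      le y (x * cs.simple i) → le (y * cs.simple i) (x * cs.simple i))
    -- (PO3ii): if `xs ⊲ x` and `xs ⊴ y` then `xs ⊴ ys`
    (PO3ii : ∀ (x y : W) (i : B), (le (x * cs.simple i) x ∧ x * cs.simple i ≠ x) →
      le (x * cs.simple i) y → le (x * cs.simple i) (y * cs.simple i))
    (i : B) (t : W) (ht : cs.IsReflection t) (hst : cs.simple i ≠ t)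
    (w : W)
    (hws : covBy le w (w * cs.simple i))
    (hwt : covBy le w (w * t)) :
    covBy le (w * cs.simple i) (w * t * cs.simple i) ∧
      covBy le (w * t) (w * t * cs.simple i) :=
  stmt4_general cs le htrans hantisymm PO1 PO2 PO3i PO3ii i t ht hst w hws hwt
end

section
/- Let $\Delta$ be a finite root system with Weyl group $W$ and fix $\alpha \in \Delta_+$ and $w \in W$ with $w \ne e$ and $w \ne s_\alpha$ and $w^{-1}(\alpha) \in \Delta_+$. Let $C^w$ be the closed convex cone generated by $\{\beta \in \Delta_+ : w^{-1}(\beta) \in \Delta_-\}$. Then $\alpha \notin C^w$ and $-\alpha \notin C^w$. -/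
/-!
Both claims are separations by a linear functional that is nonnegative on the generators of
`C^w`, hence on all of `C^w`. For `-α` take `φ` itself: the generators are positive roots,
while `φ (-α) < 0`. For `α` take `-(φ ∘ w⁻¹)`: the generators are sent to negative roots by
`w⁻¹`, while `w⁻¹ α` is a positive root.
-/

section ConeSeparation

variable {𝕜 M : Type*} [CommRing 𝕜] [PartialOrder 𝕜] [IsOrderedRing 𝕜]
  [AddCommGroup M] [Module 𝕜 M]

theorem map_sum_smul_nonneg (ψ : M →ₗ[𝕜] 𝕜) {s : Finset M} (hs : ∀ β ∈ s, 0 ≤ ψ β)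
    {c : M → 𝕜} (hc : ∀ β ∈ s, 0 ≤ c β) : 0 ≤ ψ (∑ β ∈ s, c β • β) := by
  rw [map_sum]
  exact Finset.sum_nonneg fun β hβ => by
    rw [map_smul, smul_eq_mul]
    exact mul_nonneg (hc β hβ) (hs β hβ)

theorem ne_sum_smul_of_map_neg (ψ : M →ₗ[𝕜] 𝕜) {s : Finset M} (hs : ∀ β ∈ s, 0 ≤ ψ β)
    {c : M → 𝕜} (hc : ∀ β ∈ s, 0 ≤ c β) {v : M} (hv : ψ v < 0) :
    v ≠ ∑ β ∈ s, c β • β := by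
  rintro rfl
  exact (map_sum_smul_nonneg ψ hs hc).not_gt hv

end ConeSeparation

theorem stmt9_general {V : Type*} [NormedAddCommGroup V] [InnerProductSpace ℝ V]
    [DecidableEq V]
    -- the positive roots of the finite root system
    (Δp : Finset V)
    -- the positive roots lie in an open half space
    (φ : V →ₗ[ℝ] ℝ) (hφ : ∀ β ∈ Δp, 0 < φ β)
    (α : V) (hα : α ∈ Δp)
    (w : V ≃ₗᵢ[ℝ] V)
    (hwα : w.symm α ∈ Δp)
    -- the closed convex cone generated by `{β ∈ Δ₊ : w⁻¹(β) ∈ Δ₋}`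
    (Cw : Set V)
    (hCw : Cw = {v : V | ∃ c : V → ℝ, (∀ β, 0 ≤ c β) ∧
      v = ∑ β ∈ Δp.filter (fun β => -(w.symm β) ∈ Δp), c β • β}) :
    α ∉ Cw ∧ -α ∉ Cw := by
  subst hCw
  set ψ : V →ₗ[ℝ] ℝ := -(φ ∘ₗ w.symm.toLinearEquiv.toLinearMap)
  have hψ_nonneg : ∀ β ∈ Δp.filter (fun β => -(w.symm β) ∈ Δp), 0 ≤ ψ β :=
    fun β hβ => by
      simpa [ψ] using (hφ _ (Finset.mem_filter.1 hβ).2).le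
  have hφ_nonneg : ∀ β ∈ Δp.filter (fun β => -(w.symm β) ∈ Δp), 0 ≤ φ β :=
    fun β hβ => (hφ β (Finset.mem_filter.1 hβ).1).le
  constructor
  · rintro ⟨c, hc, hsum⟩
    exact ne_sum_smul_of_map_neg ψ hψ_nonneg (fun β _ => hc β)
      (by simpa [ψ] using hφ _ hwα) hsum
  · rintro ⟨c, hc, hsum⟩
    exact ne_sum_smul_of_map_neg φ hφ_nonneg (fun β _ => hc β) (by simpa using hφ α hα) hsum

/-- **`α ∉ ± C^w`** (key step in Proposition 4.3 of the paper). -/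
theorem stmt9 {V : Type*} [NormedAddCommGroup V] [InnerProductSpace ℝ V]
    [FiniteDimensional ℝ V] [DecidableEq V]
    -- the positive roots of the finite root system
    (Δp : Finset V) (hne : ∀ β ∈ Δp, β ≠ 0)
    (hnegdisj : ∀ β ∈ Δp, -β ∉ Δp)
    -- the positive roots lie in an open half space
    (φ : V →ₗ[ℝ] ℝ) (hφ : ∀ β ∈ Δp, 0 < φ β)
    -- the Weyl group, generated by the reflections in the roots
    (W : Subgroup (V ≃ₗᵢ[ℝ] V))
    (hW : W = Subgroup.closure
      {g : V ≃ₗᵢ[ℝ] V | ∃ α ∈ Δp, g = Submodule.reflection ((ℝ ∙ α)ᗮ)})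
    (hInv : ∀ g ∈ W, ∀ β ∈ Δp, g β ∈ Δp ∨ -(g β) ∈ Δp)
    (α : V) (hα : α ∈ Δp)
    (w : V ≃ₗᵢ[ℝ] V) (hwW : w ∈ W)
    (hw1 : w ≠ 1) (hws : w ≠ Submodule.reflection ((ℝ ∙ α)ᗮ))
    (hwα : w.symm α ∈ Δp)
    -- the closed convex cone generated by `{β ∈ Δ₊ : w⁻¹(β) ∈ Δ₋}`
    (Cw : Set V)
    (hCw : Cw = {v : V | ∃ c : V → ℝ, (∀ β, 0 ≤ c β) ∧
      v = ∑ β ∈ Δp.filter (fun β => -(w.symm β) ∈ Δp), c β • β}) :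
    α ∉ Cw ∧ -α ∉ Cw :=
  stmt9_general Δp φ hφ α hα w hwα Cw hCw
end

section
/- Let $S = k[\alpha, c]$ over a field $k$ of characteristic $0$ (or large enough), $n \in \mathbb{Z}$, $r \in \mathbb{Z}_{>0}$. For $h \in \mathbb{Z}$ define $z_h := 0$ if $|h| \in [|n|-r+1, |n|]$; $z_h := \prod_{i=0}^{r-1} (\alpha + (|n|-h-i)c)(|n|-h-i)$ if $0 < h \le |n|-r$; and $z_h := \prod_{i=0}^{r-1} (-\alpha + (|n|+h-i)c)(|n|+h-i)$ if $r-|n| \le h \le 0$. Then for every $h > 0 \ge k$ in the allowed range, $z_h - z_k$ is divisible by $-\alpha + (h+k)c$ in $S$. -/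
/-!
STATEMENT 14 (Lemma 6.3 of the paper): the global sections `ᵉz^r` of the structure
sheaf of the stable moment graph in the `̂𝔰𝔩₂` case.  We work in `S = K[α, c]` with
`α = X 0`, `c = X 1`.
-/

open MvPolynomial

/-- The tuple `ᵉz^r_{nα}`: its component at the vertex `hα`. -/
noncomputable def zsec (K : Type*) [Field K] (n : ℤ) (r : ℕ) (h : ℤ) :
    MvPolynomial (Fin 2) K :=
  if |n| - (r : ℤ) + 1 ≤ |h| ∧ |h| ≤ |n| then 0
  else if 0 < h then
    ∏ i ∈ Finset.range r,
      ((X 0 + C ((|n| - h - (i : ℤ) : ℤ) : K) * X 1) * C ((|n| - h - (i : ℤ) : ℤ) : K))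
  else
    ∏ i ∈ Finset.range r,
      ((-(X 0) + C ((|n| + h - (i : ℤ) : ℤ) : K) * X 1) * C ((|n| + h - (i : ℤ) : ℤ) : K))

/-- **`ᵉz^r` satisfies the congruences along all stable edges**: for vertices
`h > 0 ≥ k` in the interval `[-|n|, |n|]`, the difference of the components is
divisible by the label `-α + (h+k)c`. -/
theorem stmt14 (K : Type*) [Field K] [CharZero K] (n : ℤ) (r : ℕ) (hr : 0 < r)
    (h k : ℤ) (hh : 0 < h) (hk : k ≤ 0) (hh' : h ≤ |n|) (hk' : -|n| ≤ k) :
    (-(X 0) + C ((h + k : ℤ) : K) * X 1) ∣ (zsec K n r h - zsec K n r k) := by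
  set m : K := ((h + k : ℤ) : K) with hm
  set a : MvPolynomial (Fin 1) K := C m * X 0 with ha
  set e := MvPolynomial.finSuccEquiv K 1 with he
  set Ψ : MvPolynomial (Fin 2) K →+* MvPolynomial (Fin 1) K :=
    (Polynomial.evalRingHom a).comp
      (e : MvPolynomial (Fin 2) K →+* Polynomial (MvPolynomial (Fin 1) K)) with hΨ
  have hone : (1 : Fin 2) = Fin.succ 0 := rfl
  have hΨX0 : Ψ (X 0) = a := by
    show Polynomial.eval a (e (X 0)) = a
    rw [he, MvPolynomial.finSuccEquiv_X_zero, Polynomial.eval_X]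
  have hΨX1 : Ψ (X 1) = X 0 := by
    show Polynomial.eval a (e (X 1)) = X 0
    rw [he, hone, MvPolynomial.finSuccEquiv_X_succ, Polynomial.eval_C]
  have hΨC : ∀ x : K, Ψ (C x) = C x := by
    intro x
    show Polynomial.eval a (e (C x)) = C x
    rw [he, MvPolynomial.finSuccEquiv_apply, MvPolynomial.eval₂Hom_C]
    simp
  have Hh : Ψ (zsec K n r h) =
      ∏ i ∈ Finset.range r,
        (C ((|n| - h - (i : ℤ) : ℤ) : K) * C ((|n| + k - (i : ℤ) : ℤ) : K) * X 0) := by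
    unfold zsec
    by_cases hz : |n| - (r : ℤ) + 1 ≤ |h| ∧ |h| ≤ |n|
    · rw [if_pos hz, map_zero]
      symm
      refine Finset.prod_eq_zero (i := (|n| - h).toNat) ?_ ?_
      · rw [Finset.mem_range]
        have hab : |h| = h := abs_of_pos hh
        omega
      · have e0 : (|n| - h - (((|n| - h).toNat : ℕ) : ℤ) : ℤ) = 0 := by
          omega
        rw [e0]; simp
    · rw [if_neg hz, if_pos hh, map_prod]
      refine Finset.prod_congr rfl ?_
      intro i _
      simp only [map_mul, map_add, hΨX0, hΨX1, hΨC]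
      have e1 : ((|n| + k - (i : ℤ) : ℤ) : K) = m + ((|n| - h - (i : ℤ) : ℤ) : K) := by
        rw [hm]; push_cast; ring
      rw [e1, map_add, ha]; ring
  have Hk : Ψ (zsec K n r k) =
      ∏ i ∈ Finset.range r,
        (C ((|n| - h - (i : ℤ) : ℤ) : K) * C ((|n| + k - (i : ℤ) : ℤ) : K) * X 0) := by
    unfold zsec
    by_cases hz : |n| - (r : ℤ) + 1 ≤ |k| ∧ |k| ≤ |n|
    · rw [if_pos hz, map_zero]
      symm
      refine Finset.prod_eq_zero (i := (|n| + k).toNat) ?_ ?_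
      · rw [Finset.mem_range]
        have hab : |k| = -k := abs_of_nonpos hk
        omega
      · have e0 : (|n| + k - (((|n| + k).toNat : ℕ) : ℤ) : ℤ) = 0 := by
          omega
        rw [e0]; simp [mul_comm]
    · rw [if_neg hz, if_neg (not_lt.mpr hk), map_prod]
      refine Finset.prod_congr rfl ?_
      intro i _
      simp only [map_mul, map_add, map_neg, hΨX0, hΨX1, hΨC]
      have e1 : ((|n| - h - (i : ℤ) : ℤ) : K) = ((|n| + k - (i : ℤ) : ℤ) : K) - m := by
        rw [hm]; push_cast; ring
      rw [e1, map_sub, ha]; ring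
  have key : Ψ (zsec K n r h - zsec K n r k) = 0 := by
    rw [map_sub, Hh, Hk, sub_self]
  rw [← map_dvd_iff e]
  have hed : e (-(X 0) + C m * X 1) = -(Polynomial.X - Polynomial.C a) := by
    rw [map_add, map_neg, map_mul]
    rw [he]
    rw [MvPolynomial.finSuccEquiv_X_zero, hone, MvPolynomial.finSuccEquiv_X_succ]
    rw [MvPolynomial.finSuccEquiv_apply, MvPolynomial.eval₂Hom_C]
    rw [ha]
    simp only [RingHom.coe_comp, Function.comp_apply]
    rw [← Polynomial.C_mul]
    ring
  rw [hed]
  refine (neg_dvd).mpr ((Polynomial.dvd_iff_isRoot).mpr ?_)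
  show Polynomial.eval a (e (zsec K n r h - zsec K n r k)) = 0
  exact key
end
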